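/- Let d ≥ 1, 0 < α < 2, x ∈ ℝ^d, r₀ > 0, and let ψ : ℝ^d → ℝ be four times continuously differentiable on the closed ball B̄_{r₀}(x), with |D⁴ψ(z)(η, η, η, η)| ≤ M₄ for all z ∈ B̄_{r₀}(x) and all unit vectors η. Then for every unit vector ξ, | ∫_0^{r₀} (2ψ(x) − ψ(x + rξ) − ψ(x − rξ)) r^{−1−α} dr + (r₀^{2−α}/(2 − α)) ξᵀ Hess ψ(x) ξ | ≤ (M₄/12) · r₀^{4−α}/(4 − α). -/

import Mathlib

/-!
Along the line `t ↦ x + t • ξ`, the Taylor expansions of order four with Lagrange remainder at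
`r` and at `-r` have the same even terms and opposite odd terms, so the second difference
`2 ψ x - ψ (x + r • ξ) - ψ (x - r • ξ)` equals `-r ^ 2 D²ψ(x)(ξ, ξ)` up to an error of at most
`M₄ r ^ 4 / 12`. After multiplication by `r ^ (-1 - α)` the error is `O(r ^ (3 - α))`, which
integrates to the bound, and the quadratic term integrates to `r₀ ^ (2 - α) / (2 - α)` because
`α < 2`.
-/

open MeasureTheory Metric Set
open scoped Nat

theorem ContinuousMultilinearMap.map_const_neg {𝕜 E F : Type*} [NontriviallyNormedField 𝕜]
    [NormedAddCommGroup E] [NormedSpace 𝕜 E] [NormedAddCommGroup F] [NormedSpace 𝕜 F] {k : ℕ}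
    (f : ContinuousMultilinearMap 𝕜 (fun _ : Fin k => E) F) (v : E) :
    f (fun _ => -v) = (-1 : 𝕜) ^ k • f (fun _ => v) := by
  simpa using f.map_smul_univ (fun _ => (-1 : 𝕜)) (fun _ => v)

section Line

variable {E F : Type*} [NormedAddCommGroup E] [NormedSpace ℝ E]
  [NormedAddCommGroup F] [NormedSpace ℝ F] {s : Set E} {I : Set ℝ} {x η : E}

theorem hasDerivWithinAt_iteratedFDerivWithin_line {ψ : E → F} {N : WithTop ℕ∞} {n : ℕ}
    (hs : UniqueDiffOn ℝ s) (hψ : ContDiffOn ℝ N ψ s) (hn : n < N)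
    (hI : ∀ t ∈ I, x + t • η ∈ s) {t : ℝ} (ht : t ∈ I) :
    HasDerivWithinAt (fun u => iteratedFDerivWithin ℝ n ψ s (x + u • η) (fun _ => η))
      (iteratedFDerivWithin ℝ (n + 1) ψ s (x + t • η) (fun _ => η)) I t := by
  have hD := ((hψ.differentiableOn_iteratedFDerivWithin hn hs) _ (hI t ht)).hasFDerivWithinAt
  have hline : HasDerivWithinAt (fun u : ℝ => x + u • η) η I t := by
    simpa using (((hasDerivAt_id t).smul_const η).const_add x).hasDerivWithinAt
  -- `iteratedFDerivWithin ℝ (n + 1)` is by definition the derivative of the `n`-th one, curried.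
  exact (ContinuousMultilinearMap.apply ℝ (fun _ : Fin n => E) F (fun _ => η)).hasFDerivAt
    |>.comp_hasDerivWithinAt t (hD.comp_hasDerivWithinAt t hline hI)

theorem iteratedDerivWithin_comp_line {ψ : E → F} {N : WithTop ℕ∞} {n : ℕ}
    (hs : UniqueDiffOn ℝ s) (hψ : ContDiffOn ℝ N ψ s) (hn : n ≤ N) (hIu : UniqueDiffOn ℝ I)
    (hI : ∀ t ∈ I, x + t • η ∈ s) {t : ℝ} (ht : t ∈ I) :
    iteratedDerivWithin n (fun u => ψ (x + u • η)) I t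
      = iteratedFDerivWithin ℝ n ψ s (x + t • η) (fun _ => η) := by
  induction n generalizing t with
  | zero => simp
  | succ n ih =>
    have hn' : (n : WithTop ℕ∞) < N := lt_of_lt_of_le (by exact_mod_cast n.lt_succ_self) hn
    rw [iteratedDerivWithin_succ, derivWithin_congr (fun y hy => ih hn'.le hy) (ih hn'.le ht)]
    exact (hasDerivWithinAt_iteratedFDerivWithin_line hs hψ hn' hI ht).derivWithin (hIu t ht)

theorem exists_taylor_lagrange_line {ψ : E → ℝ} {n : ℕ} (hs : UniqueDiffOn ℝ s)
    (hψ : ContDiffOn ℝ (n + 1) ψ s) {r : ℝ} (hr : 0 < r)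
    (hseg : ∀ t ∈ Icc 0 r, x + t • η ∈ s) :
    ∃ c ∈ Ioo 0 r, ψ (x + r • η) =
      ∑ k ∈ Finset.range (n + 1), r ^ k / k ! * iteratedFDerivWithin ℝ k ψ s x (fun _ => η)
        + iteratedFDerivWithin ℝ (n + 1) ψ s (x + c • η) (fun _ => η) * r ^ (n + 1) / (n + 1)! := by
  have hD : ∀ k ≤ n + 1, ∀ t ∈ Icc 0 r, iteratedDerivWithin k (fun u => ψ (x + u • η)) (Icc 0 r) t
      = iteratedFDerivWithin ℝ k ψ s (x + t • η) (fun _ => η) := fun k hk t ht =>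
    iteratedDerivWithin_comp_line hs hψ (by exact_mod_cast hk) (uniqueDiffOn_Icc hr) hseg ht
  have hφ : ContDiffOn ℝ n (fun u => ψ (x + u • η)) (Icc 0 r) :=
    (hψ.of_le (by exact_mod_cast n.le_succ)).comp (by fun_prop) hseg
  have hφ' : DifferentiableOn ℝ (iteratedDerivWithin n (fun u => ψ (x + u • η)) (Icc 0 r))
      (Ioo 0 r) := fun t ht =>
    ((hasDerivWithinAt_iteratedFDerivWithin_line hs hψ (by exact_mod_cast n.lt_succ_self) hseg
      (Ioo_subset_Icc_self ht)).differentiableWithinAt.congr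
      (fun y hy => hD n n.le_succ y hy) (hD n n.le_succ t (Ioo_subset_Icc_self ht))).mono
      Ioo_subset_Icc_self
  obtain ⟨c, hc, hT⟩ := taylor_mean_remainder_lagrange (x₀ := 0) (x := r) hr.ne
    (by rwa [uIcc_of_le hr.le]) (by rwa [uIcc_of_le hr.le, uIoo_of_le hr.le])
  rw [uIoo_of_le hr.le] at hc
  rw [uIcc_of_le hr.le, taylor_within_apply, hD _ le_rfl c (Ioo_subset_Icc_self hc),
    sub_zero] at hT
  refine ⟨c, hc, ?_⟩
  rw [← sub_eq_iff_eq_add', ← hT]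
  congr 1
  refine Finset.sum_congr rfl fun k hk => ?_
  rw [hD k (Finset.mem_range.1 hk).le 0 ⟨le_rfl, hr.le⟩]
  simp [div_eq_inv_mul]

theorem abs_second_difference_add_sq_mul_le {ψ : E → ℝ} (hs : UniqueDiffOn ℝ s)
    (hψ : ContDiffOn ℝ 4 ψ s) {r M : ℝ} (hr : 0 < r)
    (hseg : ∀ t ∈ Icc (-r) r, x + t • η ∈ s)
    (hbound : ∀ t ∈ Icc (-r) r,
      |iteratedFDerivWithin ℝ 4 ψ s (x + t • η) (fun _ => η)| ≤ M) :
    |2 * ψ x - ψ (x + r • η) - ψ (x - r • η)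
        + r ^ 2 * iteratedFDerivWithin ℝ 2 ψ s x (fun _ => η)| ≤ M / 12 * r ^ 4 := by
  have hseg_neg : ∀ t ∈ Icc 0 r, x + t • -η ∈ s := fun t ht => by
    simpa using hseg (-t) ⟨by linarith [ht.2], by linarith [ht.1]⟩
  obtain ⟨c₁, hc₁, h₁⟩ := exists_taylor_lagrange_line (n := 3) hs hψ hr
    fun t ht => hseg t ⟨by linarith [ht.1], ht.2⟩
  obtain ⟨c₂, hc₂, h₂⟩ := exists_taylor_lagrange_line (n := 3) hs hψ hr hseg_neg
  have hA := hbound c₁ ⟨by linarith [hc₁.1], hc₁.2.le⟩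
  have hB := hbound (-c₂) ⟨by linarith [hc₂.2], by linarith [hc₂.1]⟩
  simp only [ContinuousMultilinearMap.map_const_neg, Finset.sum_range_succ,
    Finset.sum_range_zero, smul_neg, ← sub_eq_add_neg] at h₁ h₂
  norm_num [Nat.factorial] at h₁ h₂
  rw [neg_smul, ← sub_eq_add_neg] at hB
  set A := iteratedFDerivWithin ℝ 4 ψ s (x + c₁ • η) (fun _ => η)
  set B := iteratedFDerivWithin ℝ 4 ψ s (x - c₂ • η) (fun _ => η)
  calc |2 * ψ x - ψ (x + r • η) - ψ (x - r • η)
          + r ^ 2 * iteratedFDerivWithin ℝ 2 ψ s x (fun _ => η)|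
        = |A + B| * (r ^ 4 / 24) := by
          rw [h₁, h₂, ← abs_neg, ← abs_of_pos (by positivity : 0 < r ^ 4 / 24), ← abs_mul]
          ring_nf
    _ ≤ (M + M) * (r ^ 4 / 24) := by
          gcongr
          exact (abs_add_le A B).trans (add_le_add hA hB)
    _ = M / 12 * r ^ 4 := by ring

end Line

theorem integrableOn_Ioc_rpow {b p : ℝ} (hp : -1 < p) :
    IntegrableOn (fun r : ℝ => r ^ p) (Ioc 0 b) :=
  (intervalIntegral.intervalIntegrable_rpow' hp).1

theorem integral_Ioc_rpow {b p : ℝ} (hb : 0 ≤ b) (hp : -1 < p) :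
    ∫ r in Ioc 0 b, r ^ p = b ^ (p + 1) / (p + 1) := by
  rw [← intervalIntegral.integral_of_le hb, integral_rpow (Or.inl hp),
    Real.zero_rpow (by linarith), sub_zero]

theorem abs_integral_mul_rpow_add_le {f : ℝ → ℝ} {r₀ α c K : ℝ} (hr₀ : 0 ≤ r₀) (hα : α < 2)
    (hf : ContinuousOn f (Ioc 0 r₀)) (hfK : ∀ r ∈ Ioc 0 r₀, |f r + r ^ 2 * c| ≤ K * r ^ 4) :
    |(∫ r in Ioc 0 r₀, f r * r ^ (-1 - α)) + r₀ ^ (2 - α) / (2 - α) * c|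
      ≤ K * (r₀ ^ (4 - α) / (4 - α)) := by
  have hpow : ∀ r ∈ Ioc (0 : ℝ) r₀, ∀ n : ℕ, r ^ n * r ^ (-1 - α) = r ^ (n - 1 - α) := by
    intro r hr n
    rw [mul_comm, ← Real.rpow_add_natCast hr.1.ne']
    ring_nf
  have hbound : ∀ᵐ r ∂volume.restrict (Ioc 0 r₀),
      ‖(f r + r ^ 2 * c) * r ^ (-1 - α)‖ ≤ K * r ^ (3 - α) := by
    refine (ae_restrict_iff' measurableSet_Ioc).2 (ae_of_all _ fun r hr => ?_)
    have hw : 0 < r ^ (-1 - α) := Real.rpow_pos_of_pos hr.1 _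
    rw [Real.norm_eq_abs, abs_mul, abs_of_pos hw]
    calc |f r + r ^ 2 * c| * r ^ (-1 - α) ≤ K * r ^ 4 * r ^ (-1 - α) :=
          mul_le_mul_of_nonneg_right (hfK r hr) hw.le
      _ = K * r ^ (3 - α) := by rw [mul_assoc, hpow r hr]; norm_num
  have hdom : IntegrableOn (fun r : ℝ => K * r ^ (3 - α)) (Ioc 0 r₀) :=
    (integrableOn_Ioc_rpow (by linarith)).const_mul K
  have hcont : ContinuousOn (fun r => (f r + r ^ 2 * c) * r ^ (-1 - α)) (Ioc 0 r₀) :=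
    (hf.add (by fun_prop)).mul fun r hr =>
      (Real.continuousAt_rpow_const r _ (Or.inl hr.1.ne')).continuousWithinAt
  have hint : IntegrableOn (fun r => (f r + r ^ 2 * c) * r ^ (-1 - α)) (Ioc 0 r₀) :=
    hdom.mono' (hcont.aestronglyMeasurable measurableSet_Ioc) hbound
  have hsplit : ∫ r in Ioc 0 r₀, f r * r ^ (-1 - α)
      = (∫ r in Ioc 0 r₀, (f r + r ^ 2 * c) * r ^ (-1 - α)) - r₀ ^ (2 - α) / (2 - α) * c := by
    have hI := integral_Ioc_rpow (p := 1 - α) hr₀ (by linarith)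
    rw [show 1 - α + 1 = 2 - α by ring] at hI
    rw [mul_comm _ c, ← hI, ← integral_const_mul,
      ← integral_sub hint ((integrableOn_Ioc_rpow (by linarith)).const_mul c)]
    refine setIntegral_congr_fun measurableSet_Ioc fun r hr => ?_
    rw [add_mul, mul_right_comm, hpow r hr 2]
    norm_num
    ring_nf
  rw [hsplit, sub_add_cancel, ← Real.norm_eq_abs]
  calc ‖∫ r in Ioc 0 r₀, (f r + r ^ 2 * c) * r ^ (-1 - α)‖
        ≤ ∫ r in Ioc 0 r₀, K * r ^ (3 - α) := norm_integral_le_of_norm_le hdom hbound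
    _ = K * (r₀ ^ (4 - α) / (4 - α)) := by
          rw [integral_const_mul, integral_Ioc_rpow hr₀ (by linarith)]
          ring_nf

theorem stmt_5_general (d : ℕ) (α : ℝ) (hα₂ : α < 2)
    (x : EuclideanSpace ℝ (Fin d)) (r₀ : ℝ) (hr₀ : 0 < r₀)
    (ψ : EuclideanSpace ℝ (Fin d) → ℝ)
    (hψ : ContDiffOn ℝ 4 ψ (closedBall x r₀))
    (M₄ : ℝ)
    (hbound : ∀ z ∈ closedBall x r₀, ∀ η : EuclideanSpace ℝ (Fin d), ‖η‖ = 1 →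
      |iteratedFDerivWithin ℝ 4 ψ (closedBall x r₀) z (fun _ => η)| ≤ M₄)
    (ξ : EuclideanSpace ℝ (Fin d)) (hξ : ‖ξ‖ = 1) :
    |(∫ r in Set.Ioc (0 : ℝ) r₀,
        (2 * ψ x - ψ (x + r • ξ) - ψ (x - r • ξ)) * r ^ (-1 - α))
        + r₀ ^ (2 - α) / (2 - α)
          * iteratedFDerivWithin ℝ 2 ψ (closedBall x r₀) x (fun _ => ξ)|
      ≤ M₄ / 12 * (r₀ ^ (4 - α) / (4 - α)) := by
  have hs : UniqueDiffOn ℝ (closedBall x r₀) := uniqueDiffOn_convex (convex_closedBall x r₀)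
    (by simpa [interior_closedBall x hr₀.ne'] using hr₀)
  have hline : ∀ t : ℝ, |t| ≤ r₀ → x + t • ξ ∈ closedBall x r₀ := fun t ht => by
    simpa [norm_smul, hξ] using ht
  have hline' : ∀ t : ℝ, |t| ≤ r₀ → x - t • ξ ∈ closedBall x r₀ := fun t ht => by
    simpa [sub_eq_add_neg, ← neg_smul] using hline (-t) (by rwa [abs_neg])
  refine abs_integral_mul_rpow_add_le hr₀.le hα₂ ?_ fun r hr => ?_
  · have habs : ∀ r ∈ Ioc 0 r₀, |r| ≤ r₀ := fun r hr => (abs_of_pos hr.1).trans_le hr.2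
    exact (continuousOn_const.sub
      (hψ.continuousOn.comp (by fun_prop) fun r hr => hline r (habs r hr))).sub
      (hψ.continuousOn.comp (by fun_prop) fun r hr => hline' r (habs r hr))
  · have hIcc : ∀ t ∈ Icc (-r) r, |t| ≤ r₀ := fun t ht => (abs_le.2 ht).trans hr.2
    exact abs_second_difference_add_sq_mul_le hs hψ hr.1 (fun t ht => hline t (hIcc t ht))
      fun t ht => hbound _ (hline t (hIcc t ht)) ξ hξ

theorem stmt_5 (d : ℕ) (hd : 1 ≤ d) (α : ℝ) (hα₀ : 0 < α) (hα₂ : α < 2)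
    (x : EuclideanSpace ℝ (Fin d)) (r₀ : ℝ) (hr₀ : 0 < r₀)
    (ψ : EuclideanSpace ℝ (Fin d) → ℝ)
    (hψ : ContDiffOn ℝ 4 ψ (closedBall x r₀))
    (M₄ : ℝ)
    (hbound : ∀ z ∈ closedBall x r₀, ∀ η : EuclideanSpace ℝ (Fin d), ‖η‖ = 1 →
      |iteratedFDerivWithin ℝ 4 ψ (closedBall x r₀) z (fun _ => η)| ≤ M₄)
    (ξ : EuclideanSpace ℝ (Fin d)) (hξ : ‖ξ‖ = 1) :
    |(∫ r in Set.Ioc (0 : ℝ) r₀,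
        (2 * ψ x - ψ (x + r • ξ) - ψ (x - r • ξ)) * r ^ (-1 - α))
        + r₀ ^ (2 - α) / (2 - α)
          * iteratedFDerivWithin ℝ 2 ψ (closedBall x r₀) x (fun _ => ξ)|
      ≤ M₄ / 12 * (r₀ ^ (4 - α) / (4 - α)) :=
  stmt_5_general d α hα₂ x r₀ hr₀ ψ hψ M₄ hbound ξ hξ
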